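/- Conversely, in the k-clique reduction, if the maximum SSBM-fixed objective over choices of k shared singleton blocks equals 0, then the k vertices of G corresponding to the shared blocks form a clique in G; hence G contains a k-clique. -/

import Mathlib

/-- Log-likelihood contribution of an ordered pair of distinct singleton blocks in
the k-clique reduction (see the paper's NP-hardness proof). -/
noncomputable def cliquePairTerm (c : ℝ) (shared : Bool) : ℝ :=
  (c * Real.log (if shared then (c + 1) / 2 else c) +
    (1 - c) * Real.log (1 - (if shared then (c + 1) / 2 else c))) +
  (1 * Real.log (if shared then (c + 1) / 2 else 1) +
    0 * Real.log (1 - (if shared then (c + 1) / 2 else 1)))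

open Finset in
/-- The SSBM-fixed objective of the k-clique reduction with singleton blocks and
shared vertex set `W`. -/
noncomputable def cliqueReductionObj {V : Type*} [Fintype V] [DecidableEq V]
    (G : SimpleGraph V) [DecidableRel G.Adj] (W : Finset V) : ℝ :=
  ∑ p ∈ (Finset.univ : Finset V).offDiag,
    cliquePairTerm (if G.Adj p.1 p.2 then (1 : ℝ) else 0)
      (decide (p.1 ∈ W ∧ p.2 ∈ W))

/-! Every pair is fitted exactly, except a non-edge between two shared blocks: there the
pooled parameter is `(0 + 1) / 2`, and the pair contributes `2 log (1/2) < 0`. Since no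
term is positive, objective `0` forces every pair of shared vertices to be an edge. -/

lemma cliquePairTerm_one (shared : Bool) : cliquePairTerm 1 shared = 0 := by
  cases shared <;> simp [cliquePairTerm]

lemma cliquePairTerm_zero_false : cliquePairTerm 0 false = 0 := by
  simp [cliquePairTerm]

lemma cliquePairTerm_zero_true : cliquePairTerm 0 true = 2 * Real.log (1 / 2) := by
  norm_num [cliquePairTerm]
  ring

lemma cliquePairTerm_zero_true_neg : cliquePairTerm 0 true < 0 := by
  have : Real.log (1 / 2) < 0 := Real.log_neg (by norm_num) (by norm_num)
  rw [cliquePairTerm_zero_true]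
  linarith

lemma cliquePairTerm_nonpos {c : ℝ} (hc : c = 0 ∨ c = 1) (shared : Bool) :
    cliquePairTerm c shared ≤ 0 := by
  rcases hc with rfl | rfl
  · cases shared
    · exact cliquePairTerm_zero_false.le
    · exact cliquePairTerm_zero_true_neg.le
  · exact (cliquePairTerm_one shared).le

section

variable {V : Type*} [Fintype V] [DecidableEq V] {G : SimpleGraph V} [DecidableRel G.Adj]
  {W : Finset V}

lemma cliqueReductionObj_term_eq_zero (hobj : cliqueReductionObj G W = 0) {p : V × V}
    (hp : p ∈ (Finset.univ : Finset V).offDiag) :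
    cliquePairTerm (if G.Adj p.1 p.2 then (1 : ℝ) else 0) (decide (p.1 ∈ W ∧ p.2 ∈ W)) = 0 :=
  (Finset.sum_eq_zero_iff_of_nonpos fun _ _ => cliquePairTerm_nonpos (by split_ifs <;> simp) _).mp
    hobj p hp

lemma adj_of_cliqueReductionObj_eq_zero (hobj : cliqueReductionObj G W = 0) {x y : V}
    (hx : x ∈ W) (hy : y ∈ W) (hxy : x ≠ y) : G.Adj x y := by
  by_contra hadj
  have hterm := cliqueReductionObj_term_eq_zero hobj (p := (x, y)) (by simp [hxy])
  simp only [hadj, if_false, hx, hy, and_self, decide_true] at hterm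
  exact cliquePairTerm_zero_true_neg.ne hterm

end

/-- Conversely: if a choice of `k` shared singleton blocks achieves objective `0`,
then the corresponding `k` vertices form a clique in `G`; hence `G` has a
`k`-clique. -/
theorem zero_objective_gives_clique {V : Type*} [Fintype V] [DecidableEq V]
    (G : SimpleGraph V) [DecidableRel G.Adj] (k : ℕ) (W : Finset V)
    (hcard : W.card = k) (hobj : cliqueReductionObj G W = 0) :
    G.IsNClique k W :=
  ⟨fun _ hx _ hy hxy => adj_of_cliqueReductionObj_eq_zero hobj hx hy hxy, hcard⟩
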